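/- Let X = ℝ^d, fix a norm ‖·‖ on ℝ^d, let Q be a finitely supported probability measure with distinct support points, let G_t = (supp(Q), E) be any t-spanner over supp(Q) (t ≥ 1), and let G_1 = (supp(Q), {(x_i, x_l) ∈ supp(Q)² : x_i ≠ x_l}) be the complete graph. Then S(Q, T_P, G_‖·‖(G_1)) ≤ S(Q, T_P, G_‖·‖(G_t)) ≤ 2t² · S(Q, T_P, G_‖·‖(G_1)). -/

import Mathlib

open MeasureTheory Filter Finset

noncomputable section

namespace Stein

variable {d : ℕ}

/-- `N` is a norm on `ℝ^d` (represented as a real-valued function on `Fin d → ℝ`). -/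
def IsNorm (N : (Fin d → ℝ) → ℝ) : Prop :=
  (∀ v, 0 ≤ N v) ∧ (∀ v, N v = 0 ↔ v = 0) ∧
    (∀ (c : ℝ) (v), N (c • v) = |c| * N v) ∧ (∀ v w, N (v + w) ≤ N v + N w)

/-- The dual norm `‖w‖* = sup {⟨w, v⟩ : N v = 1}` on vectors. -/
def dualVec (N : (Fin d → ℝ) → ℝ) (w : Fin d → ℝ) : ℝ :=
  sSup {r | ∃ v : Fin d → ℝ, N v = 1 ∧ r = ∑ i, w i * v i}

/-- Matrix-vector multiplication. -/
def matVec (M : Fin d → Fin d → ℝ) (v : Fin d → ℝ) : Fin d → ℝ :=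
  fun j => ∑ k, M j k * v k

/-- The dual norm `‖M‖* = sup {‖M v‖* : N v = 1}` on matrices. -/
def dualMat (N : (Fin d → ℝ) → ℝ) (M : Fin d → Fin d → ℝ) : ℝ :=
  sSup {r | ∃ v : Fin d → ℝ, N v = 1 ∧ r = dualVec N (matVec M v)}

/-- The gradient of a scalar function, as a vector of partial derivatives. -/
def gradv (f : (Fin d → ℝ) → ℝ) (x : Fin d → ℝ) : Fin d → ℝ :=
  fun j => fderiv ℝ f x (Pi.single j 1)

/-- `∇ log p`. -/
def gradLog (p : (Fin d → ℝ) → ℝ) (x : Fin d → ℝ) : Fin d → ℝ :=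
  gradv (fun y => Real.log (p y)) x

/-- The gradient matrix `(∇g(x))_{jk} = ∂_k g_j(x)` of a vector-valued function. -/
def gradMat (g : (Fin d → ℝ) → Fin d → ℝ) (x : Fin d → ℝ) : Fin d → Fin d → ℝ :=
  fun j k => fderiv ℝ (fun y => g y j) x (Pi.single k 1)

/-- The Langevin Stein operator `(T_P g)(x) = ⟨g(x), ∇log p(x)⟩ + ∑_j ∂_j g_j(x)`. -/
def steinOp (p : (Fin d → ℝ) → ℝ) (g : (Fin d → ℝ) → Fin d → ℝ) (x : Fin d → ℝ) : ℝ :=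
  (∑ j, g x j * gradLog p x j) + ∑ j, gradMat g x j j

/-- `n` is an outward unit normal vector to `X` at the boundary point `x`. -/
def isOutwardNormal (X : Set (Fin d → ℝ)) (x n : Fin d → ℝ) : Prop :=
  x ∈ frontier X ∧ (∑ i, n i * n i) = 1 ∧ ∀ y ∈ X, (∑ i, n i * (y i - x i)) ≤ 0

/-- The (non-uniform) classical Stein set `G^{c1:3}_‖·‖`; the classical Stein set is
`steinSet N X 1 1 1`.  The boundary condition `⟨g(x), n(x)⟩ = 0` is imposed at every
boundary point at which the outward unit normal is defined (i.e. unique). -/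
def steinSet (N : (Fin d → ℝ) → ℝ) (X : Set (Fin d → ℝ)) (c1 c2 c3 : ℝ) :
    Set ((Fin d → ℝ) → Fin d → ℝ) :=
  {g | (∀ x ∈ X, DifferentiableAt ℝ g x) ∧
       (∀ x ∈ X, DifferentiableAt ℝ (fun y => gradMat g y) x) ∧
       (∀ x ∈ X, dualVec N (g x) ≤ c1) ∧
       (∀ x ∈ X, dualMat N (gradMat g x) ≤ c2) ∧
       (∀ x ∈ X, ∀ y ∈ X, dualMat N (gradMat g x - gradMat g y) ≤ c3 * N (x - y)) ∧
       (∀ x n, isOutwardNormal X x n → (∃! m, isOutwardNormal X x m) →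
          (∑ i, g x i * n i) = 0)}

/-- The Stein discrepancy of a finitely supported measure with support `S` and
mass function `q`, over the function class `G`. -/
def steinDiscr (N : (Fin d → ℝ) → ℝ) (p : (Fin d → ℝ) → ℝ)
    (S : Finset (Fin d → ℝ)) (q : (Fin d → ℝ) → ℝ)
    (G : Set ((Fin d → ℝ) → Fin d → ℝ)) : ℝ :=
  sSup {r | ∃ g ∈ G, r = |∑ x ∈ S, q x * steinOp p g x|}

/-- The graph Stein set `G_‖·‖(G)` for a graph with vertex set `V` and edge set `E`. -/
def graphSteinSet {d : ℕ} (N : (Fin d → ℝ) → ℝ) (V : Finset (Fin d → ℝ))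
    (E : Set ((Fin d → ℝ) × (Fin d → ℝ))) : Set ((Fin d → ℝ) → Fin d → ℝ) :=
  {g | (∀ x, DifferentiableAt ℝ g x) ∧
       (∀ x ∈ V, dualVec N (g x) ≤ 1 ∧ dualMat N (gradMat g x) ≤ 1) ∧
       (∀ e ∈ E,
          dualVec N (g e.1 - g e.2) ≤ N (e.1 - e.2) ∧
          dualMat N (gradMat g e.1 - gradMat g e.2) ≤ N (e.1 - e.2) ∧
          dualVec N (g e.1 - g e.2 - matVec (gradMat g e.1) (e.1 - e.2)) ≤
            (1 / 2) * N (e.1 - e.2) ^ 2 ∧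
          dualVec N (g e.1 - g e.2 - matVec (gradMat g e.2) (e.1 - e.2)) ≤
            (1 / 2) * N (e.1 - e.2) ^ 2)}

/-- `(V, E)` is a `t`-spanner: each edge joins vertices of `V`, and every pair of distinct
vertices is joined by an edge path of total length at most `t` times their distance. -/
def IsSpanner {d : ℕ} (N : (Fin d → ℝ) → ℝ) (V : Finset (Fin d → ℝ))
    (E : Set ((Fin d → ℝ) × (Fin d → ℝ))) (t : ℝ) : Prop :=
  (∀ e ∈ E, e.1 ∈ V ∧ e.2 ∈ V) ∧
    ∀ x ∈ V, ∀ y ∈ V, x ≠ y →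
      ∃ (L : ℕ) (z : ℕ → Fin d → ℝ), z 0 = x ∧ z L = y ∧
        (∀ l < L, (z l, z (l + 1)) ∈ E) ∧
        (∑ l ∈ Finset.range L, N (z l - z (l + 1))) ≤ t * N (x - y)

/-!
The edge conditions of a graph Stein set compose along paths: if they hold for `(x, y)` and
`(y, z)` with the edge lengths relaxed to `D₁` and `D₂`, they hold for `(x, z)` with `D₁ + D₂`,
because the cross terms `(∇g(x) - ∇g(y)) (z - y)` of the two Taylor remainders cost `D₁ D₂` and
`D₁² / 2 + D₂² / 2 + D₁ D₂ = (D₁ + D₂)² / 2`. Along a spanner path of length at most `t ‖x - y‖`,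
a function `g` of the spanner Stein set therefore meets the complete-graph conditions up to the
factor `t`, so `g / (2 t²)` lies in the complete-graph Stein set, and linearity of the Stein
operator gives the upper bound. The lower bound is the inclusion of the complete-graph Stein set
in the spanner one. Both suprema are finite because `N` dominates a multiple of the sup norm
(compactness of the sup-norm sphere).
-/

open Matrix

namespace IsNorm

variable {N : (Fin d → ℝ) → ℝ}

lemma nonneg (hN : IsNorm N) (v : Fin d → ℝ) : 0 ≤ N v := hN.1 v

lemma map_smul (hN : IsNorm N) (c : ℝ) (v : Fin d → ℝ) : N (c • v) = |c| * N v := hN.2.2.1 c v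

lemma add_le (hN : IsNorm N) (v w : Fin d → ℝ) : N (v + w) ≤ N v + N w := hN.2.2.2 v w

lemma map_zero (hN : IsNorm N) : N 0 = 0 := (hN.2.1 0).2 rfl

lemma pos (hN : IsNorm N) {v : Fin d → ℝ} (hv : v ≠ 0) : 0 < N v :=
  (hN.nonneg v).lt_of_ne' fun h => hv ((hN.2.1 v).1 h)

lemma map_neg (hN : IsNorm N) (v : Fin d → ℝ) : N (-v) = N v := by
  rw [← neg_one_smul ℝ v, hN.map_smul, abs_neg, abs_one, one_mul]

lemma map_sub_comm (hN : IsNorm N) (v w : Fin d → ℝ) : N (v - w) = N (w - v) := by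
  rw [← neg_sub, hN.map_neg]

lemma map_inv_smul_self (hN : IsNorm N) {v : Fin d → ℝ} (hv : v ≠ 0) : N ((N v)⁻¹ • v) = 1 := by
  rw [hN.map_smul, abs_inv, abs_of_pos (hN.pos hv), inv_mul_cancel₀ (hN.pos hv).ne']

lemma map_sub_le_sum (hN : IsNorm N) (z : ℕ → Fin d → ℝ) (L : ℕ) :
    N (z 0 - z L) ≤ ∑ l ∈ range L, N (z l - z (l + 1)) := by
  induction L with
  | zero => simp [hN.map_zero]
  | succ L ih =>
    rw [sum_range_succ, ← sub_add_sub_cancel (z 0) (z L)]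
    exact (hN.add_le _ _).trans (by linarith)

lemma convexOn (hN : IsNorm N) : ConvexOn ℝ Set.univ N :=
  ⟨convex_univ, fun v _ w _ a b ha hb _ => by
    simpa only [hN.map_smul, abs_of_nonneg ha, abs_of_nonneg hb, smul_eq_mul] using
      hN.add_le (a • v) (b • w)⟩

lemma continuous (hN : IsNorm N) : Continuous N :=
  continuousOn_univ.1 (hN.convexOn.continuousOn isOpen_univ)

lemma exists_abs_apply_le (hN : IsNorm N) : ∃ C, 0 ≤ C ∧ ∀ v i, |v i| ≤ C * N v := by
  have hne : ∀ v ∈ Metric.sphere (0 : Fin d → ℝ) 1, N v ≠ 0 := fun v hv =>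
    (hN.pos (ne_zero_of_mem_unit_sphere ⟨v, hv⟩)).ne'
  obtain ⟨C, hC⟩ := (isCompact_sphere (0 : Fin d → ℝ) 1).exists_bound_of_continuousOn
    (hN.continuous.continuousOn.inv₀ hne)
  refine ⟨max C 0, le_max_right _ _, fun v i => ?_⟩
  rcases eq_or_ne v 0 with rfl | hv
  · simp [hN.map_zero]
  have hv' : 0 < ‖v‖ := norm_pos_iff.2 hv
  have hC' := hC (‖v‖⁻¹ • v) (by simp [norm_smul, hv'.ne'])
  rw [Pi.inv_apply, hN.map_smul, abs_of_pos (inv_pos.2 hv'), Real.norm_eq_abs, mul_inv, inv_inv,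
    abs_of_pos (by positivity [hN.pos hv]), mul_inv_le_iff₀ (hN.pos hv)] at hC'
  calc |v i| ≤ ‖v‖ := norm_le_pi_norm v i
    _ ≤ C * N v := hC'
    _ ≤ max C 0 * N v := mul_le_mul_of_nonneg_right (le_max_left _ _) (hN.nonneg v)

end IsNorm

section DualNorm

variable {N : (Fin d → ℝ) → ℝ}

lemma bddAbove_dualVec_set (hN : IsNorm N) (w : Fin d → ℝ) :
    BddAbove {r | ∃ v : Fin d → ℝ, N v = 1 ∧ r = ∑ i, w i * v i} := by
  obtain ⟨C, -, hC⟩ := hN.exists_abs_apply_le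
  refine ⟨∑ i, |w i| * C, ?_⟩
  rintro _ ⟨v, hv, rfl⟩
  refine sum_le_sum fun i _ => ?_
  calc w i * v i ≤ |w i| * |v i| := (le_abs_self _).trans (abs_mul _ _).le
    _ ≤ |w i| * C := by gcongr; simpa [hv] using hC v i

lemma dotProduct_le_dualVec (hN : IsNorm N) {v : Fin d → ℝ} (hv : N v = 1) (w : Fin d → ℝ) :
    w ⬝ᵥ v ≤ dualVec N w :=
  le_csSup (bddAbove_dualVec_set hN w) ⟨v, hv, rfl⟩

lemma dualVec_le {w : Fin d → ℝ} {B : ℝ} (hB : 0 ≤ B) (h : ∀ v, N v = 1 → w ⬝ᵥ v ≤ B) :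
    dualVec N w ≤ B :=
  Real.sSup_le (by rintro _ ⟨v, hv, rfl⟩; exact h v hv) hB

lemma dotProduct_le_dualVec_mul (hN : IsNorm N) (w v : Fin d → ℝ) :
    w ⬝ᵥ v ≤ dualVec N w * N v := by
  rcases eq_or_ne v 0 with rfl | hv
  · simp [hN.map_zero]
  have h := dotProduct_le_dualVec hN (hN.map_inv_smul_self hv) w
  rwa [dotProduct_smul, smul_eq_mul, inv_mul_le_iff₀ (hN.pos hv), mul_comm] at h

lemma abs_dotProduct_le_dualVec_mul (hN : IsNorm N) (w v : Fin d → ℝ) :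
    |w ⬝ᵥ v| ≤ dualVec N w * N v := by
  have h := dotProduct_le_dualVec_mul hN w (-v)
  rw [dotProduct_neg, hN.map_neg] at h
  exact abs_le.2 ⟨by linarith, dotProduct_le_dualVec_mul hN w v⟩

lemma dualVec_nonneg (hN : IsNorm N) (w : Fin d → ℝ) : 0 ≤ dualVec N w := by
  by_cases h : ∃ v : Fin d → ℝ, N v = 1
  · obtain ⟨v, hv⟩ := h
    simpa [hv] using (abs_nonneg _).trans (abs_dotProduct_le_dualVec_mul hN w v)
  · exact Real.sSup_nonneg (by rintro _ ⟨v, hv, -⟩; exact absurd ⟨v, hv⟩ h)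

lemma dualVec_zero (hN : IsNorm N) : dualVec N (0 : Fin d → ℝ) = 0 :=
  le_antisymm (dualVec_le le_rfl fun v _ => by simp) (dualVec_nonneg hN 0)

lemma dualVec_add_le (hN : IsNorm N) (w₁ w₂ : Fin d → ℝ) :
    dualVec N (w₁ + w₂) ≤ dualVec N w₁ + dualVec N w₂ :=
  dualVec_le (add_nonneg (dualVec_nonneg hN w₁) (dualVec_nonneg hN w₂)) fun v hv => by
    rw [add_dotProduct]
    exact add_le_add (dotProduct_le_dualVec hN hv w₁) (dotProduct_le_dualVec hN hv w₂)

lemma dualVec_smul_le (hN : IsNorm N) {c : ℝ} (hc : 0 ≤ c) (w : Fin d → ℝ) :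
    dualVec N (c • w) ≤ c * dualVec N w :=
  dualVec_le (mul_nonneg hc (dualVec_nonneg hN w)) fun v hv => by
    rw [smul_dotProduct, smul_eq_mul]
    exact mul_le_mul_of_nonneg_left (dotProduct_le_dualVec hN hv w) hc

lemma bddAbove_dualMat_set (hN : IsNorm N) (M : Matrix (Fin d) (Fin d) ℝ) :
    BddAbove {r | ∃ v : Fin d → ℝ, N v = 1 ∧ r = dualVec N (matVec M v)} := by
  obtain ⟨C, hC0, hC⟩ := hN.exists_abs_apply_le
  refine ⟨∑ j, ∑ k, |M j k| * C * C, ?_⟩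
  rintro _ ⟨v, hv, rfl⟩
  refine dualVec_le (by positivity) fun u hu => sum_le_sum fun j _ => ?_
  have hMv : |∑ k, M j k * v k| ≤ ∑ k, |M j k| * C :=
    (abs_sum_le_sum_abs _ _).trans <| sum_le_sum fun k _ => by
      rw [abs_mul]; gcongr; simpa [hv] using hC v k
  calc (∑ k, M j k * v k) * u j ≤ |∑ k, M j k * v k| * |u j| :=
        (le_abs_self _).trans (abs_mul _ _).le
    _ ≤ (∑ k, |M j k| * C) * C := by gcongr; simpa [hu] using hC u j
    _ = ∑ k, |M j k| * C * C := sum_mul _ _ _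

lemma dualVec_mulVec_le_dualMat (hN : IsNorm N) {v : Fin d → ℝ} (hv : N v = 1)
    (M : Matrix (Fin d) (Fin d) ℝ) : dualVec N (M *ᵥ v) ≤ dualMat N M :=
  le_csSup (bddAbove_dualMat_set hN M) ⟨v, hv, rfl⟩

lemma dualMat_le {M : Matrix (Fin d) (Fin d) ℝ} {B : ℝ} (hB : 0 ≤ B)
    (h : ∀ v, N v = 1 → dualVec N (M *ᵥ v) ≤ B) : dualMat N M ≤ B :=
  Real.sSup_le (by rintro _ ⟨v, hv, rfl⟩; exact h v hv) hB

lemma dualMat_nonneg (hN : IsNorm N) (M : Matrix (Fin d) (Fin d) ℝ) : 0 ≤ dualMat N M :=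
  Real.sSup_nonneg (by rintro _ ⟨v, -, rfl⟩; exact dualVec_nonneg hN _)

lemma dualMat_zero (hN : IsNorm N) : dualMat N (0 : Matrix (Fin d) (Fin d) ℝ) = 0 :=
  le_antisymm (dualMat_le le_rfl fun v _ => by simp [dualVec_zero hN]) (dualMat_nonneg hN 0)

lemma dualMat_add_le (hN : IsNorm N) (M₁ M₂ : Matrix (Fin d) (Fin d) ℝ) :
    dualMat N (M₁ + M₂) ≤ dualMat N M₁ + dualMat N M₂ :=
  dualMat_le (add_nonneg (dualMat_nonneg hN M₁) (dualMat_nonneg hN M₂)) fun v hv => by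
    rw [add_mulVec]
    exact (dualVec_add_le hN _ _).trans <|
      add_le_add (dualVec_mulVec_le_dualMat hN hv M₁) (dualVec_mulVec_le_dualMat hN hv M₂)

lemma dualMat_smul_le (hN : IsNorm N) {c : ℝ} (hc : 0 ≤ c) (M : Matrix (Fin d) (Fin d) ℝ) :
    dualMat N (c • M) ≤ c * dualMat N M :=
  dualMat_le (mul_nonneg hc (dualMat_nonneg hN M)) fun v hv => by
    rw [smul_mulVec]
    exact (dualVec_smul_le hN hc _).trans <|
      mul_le_mul_of_nonneg_left (dualVec_mulVec_le_dualMat hN hv M) hc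

lemma dualVec_mulVec_le (hN : IsNorm N) (M : Matrix (Fin d) (Fin d) ℝ) (v : Fin d → ℝ) :
    dualVec N (M *ᵥ v) ≤ dualMat N M * N v := by
  rcases eq_or_ne v 0 with rfl | hv
  · simp [dualVec_zero hN, hN.map_zero]
  calc dualVec N (M *ᵥ v) = dualVec N (N v • M *ᵥ ((N v)⁻¹ • v)) := by
        rw [mulVec_smul, smul_smul, mul_inv_cancel₀ (hN.pos hv).ne', one_smul]
    _ ≤ N v * dualMat N M := (dualVec_smul_le hN (hN.nonneg v) _).trans <|
        mul_le_mul_of_nonneg_left (dualVec_mulVec_le_dualMat hN (hN.map_inv_smul_self hv) M)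
          (hN.nonneg v)
    _ = dualMat N M * N v := mul_comm _ _

lemma abs_apply_self_le_dualMat (hN : IsNorm N) (M : Matrix (Fin d) (Fin d) ℝ) (j : Fin d) :
    |M j j| ≤ dualMat N M * N (Pi.single j 1) ^ 2 := by
  have hMjj : M j j = M *ᵥ Pi.single j 1 ⬝ᵥ Pi.single j 1 := by
    rw [mulVec_single_one, dotProduct_single, mul_one, col_apply]
  rw [hMjj, sq, ← mul_assoc]
  exact (abs_dotProduct_le_dualVec_mul hN _ _).trans <|
    mul_le_mul_of_nonneg_right (dualVec_mulVec_le hN M _) (hN.nonneg _)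

end DualNorm

section EdgeBound

variable {N : (Fin d → ℝ) → ℝ} {G : (Fin d → ℝ) → Fin d → ℝ}
  {J : (Fin d → ℝ) → Matrix (Fin d) (Fin d) ℝ} {x y z : Fin d → ℝ} {D D₁ D₂ : ℝ}

def EdgeBound (N : (Fin d → ℝ) → ℝ) (G : (Fin d → ℝ) → Fin d → ℝ)
    (J : (Fin d → ℝ) → Matrix (Fin d) (Fin d) ℝ) (x y : Fin d → ℝ) (D : ℝ) : Prop :=
  dualVec N (G x - G y) ≤ D ∧ dualMat N (J x - J y) ≤ D ∧
    dualVec N (G x - G y - J x *ᵥ (x - y)) ≤ 1 / 2 * D ^ 2 ∧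
    dualVec N (G x - G y - J y *ᵥ (x - y)) ≤ 1 / 2 * D ^ 2

lemma EdgeBound.refl (hN : IsNorm N) (G : (Fin d → ℝ) → Fin d → ℝ)
    (J : (Fin d → ℝ) → Matrix (Fin d) (Fin d) ℝ) (x : Fin d → ℝ) : EdgeBound N G J x x 0 := by
  simp [EdgeBound, dualVec_zero hN, dualMat_zero hN]

lemma EdgeBound.zero (hN : IsNorm N) (x y : Fin d → ℝ) (hD : 0 ≤ D) :
    EdgeBound N 0 0 x y D := by
  simp [EdgeBound, dualVec_zero hN, dualMat_zero hN, hD]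

lemma EdgeBound.mono (h : EdgeBound N G J x y D) {D' : ℝ} (hD : 0 ≤ D) (hDD' : D ≤ D') :
    EdgeBound N G J x y D' := by
  have hsq : 1 / 2 * D ^ 2 ≤ 1 / 2 * D' ^ 2 := by gcongr
  exact ⟨h.1.trans hDD', h.2.1.trans hDD', h.2.2.1.trans hsq, h.2.2.2.trans hsq⟩

lemma EdgeBound.smul (hN : IsNorm N) (h : EdgeBound N G J x y D) {c D' : ℝ} (hc : 0 ≤ c)
    (hD : c * D ≤ D') (hD2 : c * D ^ 2 ≤ D' ^ 2) : EdgeBound N (c • G) (c • J) x y D' := by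
  obtain ⟨hG, hJ, hTx, hTy⟩ := h
  have hvec : ∀ {w B}, dualVec N w ≤ B → dualVec N (c • w) ≤ c * B := fun hw =>
    (dualVec_smul_le hN hc _).trans (mul_le_mul_of_nonneg_left hw hc)
  simp only [EdgeBound, Pi.smul_apply, smul_mulVec, ← smul_sub]
  refine ⟨(hvec hG).trans hD, ?_, (hvec hTx).trans (by linarith), (hvec hTy).trans (by linarith)⟩
  exact (dualMat_smul_le hN hc _).trans ((mul_le_mul_of_nonneg_left hJ hc).trans hD)

lemma EdgeBound.trans (hN : IsNorm N) (h₁ : EdgeBound N G J x y D₁)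
    (h₂ : EdgeBound N G J y z D₂) (hxy : N (x - y) ≤ D₁) (hyz : N (y - z) ≤ D₂) :
    EdgeBound N G J x z (D₁ + D₂) := by
  obtain ⟨hG₁, hJ₁, hTx₁, hTy₁⟩ := h₁
  obtain ⟨hG₂, hJ₂, hTx₂, hTy₂⟩ := h₂
  have hcross : ∀ {M : Matrix (Fin d) (Fin d) ℝ} {v : Fin d → ℝ} {A B : ℝ},
      dualMat N M ≤ A → N v ≤ B → dualVec N (M *ᵥ v) ≤ A * B := fun hM hv =>
    (dualVec_mulVec_le hN _ _).trans
      (mul_le_mul hM hv (hN.nonneg _) ((dualMat_nonneg hN _).trans hM))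
  have hadd3 : ∀ {u v w : Fin d → ℝ} {a b c : ℝ}, dualVec N u ≤ a → dualVec N v ≤ b →
      dualVec N w ≤ c → dualVec N (u + v + w) ≤ a + b + c := fun hu hv hw =>
    (dualVec_add_le hN _ _).trans (add_le_add ((dualVec_add_le hN _ _).trans (add_le_add hu hv)) hw)
  have hsq : 1 / 2 * D₁ ^ 2 + 1 / 2 * D₂ ^ 2 + D₁ * D₂ = 1 / 2 * (D₁ + D₂) ^ 2 := by ring
  refine ⟨?_, ?_, ?_, ?_⟩
  · rw [← sub_add_sub_cancel (G x) (G y)]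
    exact (dualVec_add_le hN _ _).trans (add_le_add hG₁ hG₂)
  · rw [← sub_add_sub_cancel (J x) (J y)]
    exact (dualMat_add_le hN _ _).trans (add_le_add hJ₁ hJ₂)
  · have hsplit : G x - G z - J x *ᵥ (x - z) = (G x - G y - J x *ᵥ (x - y)) +
        (G y - G z - J y *ᵥ (y - z)) + (J x - J y) *ᵥ (z - y) := by
      simp only [sub_mulVec, mulVec_sub]; abel
    rw [hsplit, ← hsq]
    exact hadd3 hTx₁ hTx₂ (hcross hJ₁ (by rwa [hN.map_sub_comm]))
  · have hsplit : G x - G z - J z *ᵥ (x - z) = (G x - G y - J y *ᵥ (x - y)) +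
        (G y - G z - J z *ᵥ (y - z)) + (J y - J z) *ᵥ (x - y) := by
      simp only [sub_mulVec, mulVec_sub]; abel
    rw [hsplit, ← hsq, mul_comm D₁]
    exact hadd3 hTy₁ hTy₂ (hcross hJ₂ hxy)

lemma edgeBound_of_path (hN : IsNorm N) {z : ℕ → Fin d → ℝ} {L : ℕ}
    (hz : ∀ l < L, EdgeBound N G J (z l) (z (l + 1)) (N (z l - z (l + 1)))) :
    EdgeBound N G J (z 0) (z L) (∑ l ∈ range L, N (z l - z (l + 1))) := by
  induction L with
  | zero => simpa using EdgeBound.refl hN G J (z 0)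
  | succ L ih =>
    rw [sum_range_succ]
    exact (ih fun l hl => hz l (by omega)).trans hN (hz L (by omega))
      (hN.map_sub_le_sum z L) le_rfl

lemma IsSpanner.edgeBound (hN : IsNorm N) {V : Finset (Fin d → ℝ)}
    {E : Set ((Fin d → ℝ) × (Fin d → ℝ))} {t : ℝ} (hE : IsSpanner N V E t)
    (hedge : ∀ e ∈ E, EdgeBound N G J e.1 e.2 (N (e.1 - e.2)))
    (hx : x ∈ V) (hy : y ∈ V) (hxy : x ≠ y) : EdgeBound N G J x y (t * N (x - y)) := by
  obtain ⟨L, z, rfl, rfl, hzE, hlen⟩ := hE.2 x hx y hy hxy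
  exact (edgeBound_of_path hN fun l hl => hedge _ (hzE l hl)).mono
    (sum_nonneg fun _ _ => hN.nonneg _) hlen

end EdgeBound

section SteinSet

variable {N : (Fin d → ℝ) → ℝ}

lemma mem_graphSteinSet_iff {V : Finset (Fin d → ℝ)} {E : Set ((Fin d → ℝ) × (Fin d → ℝ))}
    {g : (Fin d → ℝ) → Fin d → ℝ} :
    g ∈ graphSteinSet N V E ↔ (∀ x, DifferentiableAt ℝ g x) ∧
      (∀ x ∈ V, dualVec N (g x) ≤ 1 ∧ dualMat N (gradMat g x) ≤ 1) ∧
      ∀ e ∈ E, EdgeBound N g (gradMat g) e.1 e.2 (N (e.1 - e.2)) :=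
  Iff.rfl

lemma gradMat_zero (x : Fin d → ℝ) : gradMat (0 : (Fin d → ℝ) → Fin d → ℝ) x = 0 := by
  funext j k
  simp [gradMat]

lemma gradMat_smul {g : (Fin d → ℝ) → Fin d → ℝ} {x : Fin d → ℝ} (hg : DifferentiableAt ℝ g x)
    (c : ℝ) : gradMat (c • g) x = c • gradMat g x := by
  funext j k
  simp [gradMat, fderiv_const_mul (differentiableAt_pi.1 hg j)]

lemma steinOp_smul (p : (Fin d → ℝ) → ℝ) {g : (Fin d → ℝ) → Fin d → ℝ} {x : Fin d → ℝ}
    (hg : DifferentiableAt ℝ g x) (c : ℝ) : steinOp p (c • g) x = c * steinOp p g x := by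
  simp only [steinOp, gradMat_smul hg, Pi.smul_apply, smul_eq_mul, mul_add, mul_sum, mul_assoc]

lemma abs_steinOp_le (hN : IsNorm N) (p : (Fin d → ℝ) → ℝ) {g : (Fin d → ℝ) → Fin d → ℝ}
    {x : Fin d → ℝ} (hg : dualVec N (g x) ≤ 1) (hJ : dualMat N (gradMat g x) ≤ 1) :
    |steinOp p g x| ≤ N (gradLog p x) + ∑ j, N (Pi.single j 1) ^ 2 := by
  have hdrift : |g x ⬝ᵥ gradLog p x| ≤ N (gradLog p x) :=
    (abs_dotProduct_le_dualVec_mul hN _ _).trans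
      (mul_le_of_le_one_left (hN.nonneg _) hg)
  have hdiv : |∑ j, gradMat g x j j| ≤ ∑ j, N (Pi.single j 1) ^ 2 :=
    (abs_sum_le_sum_abs _ _).trans <| sum_le_sum fun j _ =>
      (abs_apply_self_le_dualMat hN _ j).trans (mul_le_of_le_one_left (sq_nonneg _) hJ)
  exact (abs_add_le _ _).trans (add_le_add hdrift hdiv)

lemma zero_mem_graphSteinSet (hN : IsNorm N) (V : Finset (Fin d → ℝ))
    (E : Set ((Fin d → ℝ) × (Fin d → ℝ))) : 0 ∈ graphSteinSet N V E := by
  refine mem_graphSteinSet_iff.2 ⟨fun _ => differentiableAt_const 0, fun x _ => ⟨?_, ?_⟩,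
    fun e _ => ?_⟩
  · exact (dualVec_zero hN).trans_le zero_le_one
  · rw [gradMat_zero]
    exact (dualMat_zero hN).trans_le zero_le_one
  · have hgrad : gradMat (0 : (Fin d → ℝ) → Fin d → ℝ) = 0 := funext gradMat_zero
    rw [hgrad]
    exact EdgeBound.zero hN _ _ (hN.nonneg _)

lemma graphSteinSet_complete_subset (hN : IsNorm N) {V : Finset (Fin d → ℝ)}
    {E : Set ((Fin d → ℝ) × (Fin d → ℝ))} (hEV : ∀ e ∈ E, e.1 ∈ V ∧ e.2 ∈ V) :
    graphSteinSet N V {e | e.1 ∈ V ∧ e.2 ∈ V ∧ e.1 ≠ e.2} ⊆ graphSteinSet N V E := by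
  rintro g ⟨hdiff, hvert, hedge⟩
  refine mem_graphSteinSet_iff.2 ⟨hdiff, hvert, fun e he => ?_⟩
  rcases eq_or_ne e.1 e.2 with h | h
  · rw [h, sub_self, hN.map_zero]
    exact EdgeBound.refl hN _ _ _
  · exact hedge e ⟨(hEV e he).1, (hEV e he).2, h⟩

lemma smul_mem_graphSteinSet_complete (hN : IsNorm N) {V : Finset (Fin d → ℝ)}
    {E : Set ((Fin d → ℝ) × (Fin d → ℝ))} {t : ℝ} (ht : 1 ≤ t) (hE : IsSpanner N V E t)
    {g : (Fin d → ℝ) → Fin d → ℝ} (hg : g ∈ graphSteinSet N V E) :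
    (2 * t ^ 2)⁻¹ • g ∈ graphSteinSet N V {e | e.1 ∈ V ∧ e.2 ∈ V ∧ e.1 ≠ e.2} := by
  obtain ⟨hdiff, hvert, hedge⟩ := hg
  set c := (2 * t ^ 2)⁻¹ with hc_def
  have hc : 0 ≤ c := by positivity
  have hct2 : c * t ^ 2 = 1 / 2 := by rw [hc_def]; field_simp
  have hc1 : c ≤ 1 := by nlinarith
  have hct : c * t ≤ 1 := by nlinarith
  have hgrad : gradMat (c • g) = c • gradMat g := funext fun x => gradMat_smul (hdiff x) c
  refine mem_graphSteinSet_iff.2 ⟨fun x => (hdiff x).const_smul c, fun x hx => ⟨?_, ?_⟩, ?_⟩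
  · exact (dualVec_smul_le hN hc _).trans (mul_le_one₀ hc1 (dualVec_nonneg hN _) (hvert x hx).1)
  · rw [hgrad]
    exact (dualMat_smul_le hN hc _).trans (mul_le_one₀ hc1 (dualMat_nonneg hN _) (hvert x hx).2)
  · rintro ⟨x, y⟩ ⟨hx, hy, hxy⟩
    have hn := hN.nonneg (x - y)
    rw [hgrad]
    refine (hE.edgeBound hN hedge hx hy hxy).smul hN hc ?_ ?_
    · nlinarith
    · nlinarith

end SteinSet

section Discrepancy

variable {N : (Fin d → ℝ) → ℝ} {p : (Fin d → ℝ) → ℝ} {S : Finset (Fin d → ℝ)}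
  {q : (Fin d → ℝ) → ℝ} {G G' : Set ((Fin d → ℝ) → Fin d → ℝ)}

def steinValues (p : (Fin d → ℝ) → ℝ) (S : Finset (Fin d → ℝ)) (q : (Fin d → ℝ) → ℝ)
    (G : Set ((Fin d → ℝ) → Fin d → ℝ)) : Set ℝ :=
  {r | ∃ g ∈ G, r = |∑ x ∈ S, q x * steinOp p g x|}

lemma steinDiscr_eq_sSup : steinDiscr N p S q G = sSup (steinValues p S q G) := rfl

lemma bddAbove_steinValues_graphSteinSet (hN : IsNorm N) (p : (Fin d → ℝ) → ℝ)
    (S : Finset (Fin d → ℝ)) (q : (Fin d → ℝ) → ℝ) (E : Set ((Fin d → ℝ) × (Fin d → ℝ))) :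
    BddAbove (steinValues p S q (graphSteinSet N S E)) := by
  refine ⟨∑ x ∈ S, |q x| * (N (gradLog p x) + ∑ j, N (Pi.single j 1) ^ 2), ?_⟩
  rintro _ ⟨g, hg, rfl⟩
  refine (abs_sum_le_sum_abs _ _).trans (sum_le_sum fun x hx => ?_)
  rw [abs_mul]
  exact mul_le_mul_of_nonneg_left
    (abs_steinOp_le hN p (hg.2.1 x hx).1 (hg.2.1 x hx).2) (abs_nonneg _)

lemma steinDiscr_mono (hGG' : G ⊆ G') (hG : G.Nonempty)
    (hbdd : BddAbove (steinValues p S q G')) : steinDiscr N p S q G ≤ steinDiscr N p S q G' := by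
  rw [steinDiscr_eq_sSup, steinDiscr_eq_sSup]
  obtain ⟨g, hg⟩ := hG
  refine csSup_le_csSup hbdd ⟨_, g, hg, rfl⟩ ?_
  rintro _ ⟨g, hg, rfl⟩
  exact ⟨g, hGG' hg, rfl⟩

lemma steinDiscr_le_inv_mul {c : ℝ} (hc : 0 < c) (hG : G.Nonempty)
    (hbdd : BddAbove (steinValues p S q G'))
    (hsmul : ∀ g ∈ G, (∀ x, DifferentiableAt ℝ g x) ∧ c • g ∈ G') :
    steinDiscr N p S q G ≤ c⁻¹ * steinDiscr N p S q G' := by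
  rw [steinDiscr_eq_sSup]
  obtain ⟨g₀, hg₀⟩ := hG
  refine csSup_le ⟨_, g₀, hg₀, rfl⟩ ?_
  rintro _ ⟨g, hg, rfl⟩
  obtain ⟨hdiff, hcg⟩ := hsmul g hg
  have hscale : ∑ x ∈ S, q x * steinOp p (c • g) x = c * ∑ x ∈ S, q x * steinOp p g x := by
    simp only [steinOp_smul p (hdiff _), mul_sum, mul_left_comm c]
  calc |∑ x ∈ S, q x * steinOp p g x| = c⁻¹ * |∑ x ∈ S, q x * steinOp p (c • g) x| := by
        rw [hscale, abs_mul, abs_of_pos hc, inv_mul_cancel_left₀ hc.ne']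
    _ ≤ c⁻¹ * sSup (steinValues p S q G') := by
        gcongr
        exact le_csSup hbdd ⟨_, hcg, rfl⟩

end Discrepancy

theorem spanner_completeGraph_equiv_general {d : ℕ} (N : (Fin d → ℝ) → ℝ) (hN : IsNorm N)
    (p : (Fin d → ℝ) → ℝ)
    (S : Finset (Fin d → ℝ)) (q : (Fin d → ℝ) → ℝ)
    (t : ℝ) (ht : 1 ≤ t) (E : Set ((Fin d → ℝ) × (Fin d → ℝ)))
    (hE : IsSpanner N S E t) :
    steinDiscr N p S q (graphSteinSet N S {e | e.1 ∈ S ∧ e.2 ∈ S ∧ e.1 ≠ e.2}) ≤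
        steinDiscr N p S q (graphSteinSet N S E) ∧
      steinDiscr N p S q (graphSteinSet N S E) ≤
        2 * t ^ 2 *
          steinDiscr N p S q (graphSteinSet N S {e | e.1 ∈ S ∧ e.2 ∈ S ∧ e.1 ≠ e.2}) := by
  have hbdd := bddAbove_steinValues_graphSteinSet hN p S q
  have hne := fun E' => (⟨0, zero_mem_graphSteinSet hN S E'⟩ : (graphSteinSet N S E').Nonempty)
  refine ⟨steinDiscr_mono (graphSteinSet_complete_subset hN hE.1) (hne _) (hbdd E), ?_⟩
  simpa using steinDiscr_le_inv_mul (c := (2 * t ^ 2)⁻¹) (by positivity) (hne E) (hbdd _)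
    fun g hg => ⟨hg.1, smul_mem_graphSteinSet_complete hN ht hE hg⟩

/-- Proposition 6: equivalence of spanner and complete graph Stein
discrepancies. -/
theorem spanner_completeGraph_equiv {d : ℕ} (N : (Fin d → ℝ) → ℝ) (hN : IsNorm N)
    (p : (Fin d → ℝ) → ℝ) (hppos : ∀ x, 0 < p x) (hpC1 : ContDiff ℝ 1 p)
    (S : Finset (Fin d → ℝ)) (q : (Fin d → ℝ) → ℝ)
    (hq0 : ∀ x ∈ S, 0 ≤ q x) (hq1 : ∑ x ∈ S, q x = 1)
    (t : ℝ) (ht : 1 ≤ t) (E : Set ((Fin d → ℝ) × (Fin d → ℝ)))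
    (hE : IsSpanner N S E t) :
    steinDiscr N p S q (graphSteinSet N S {e | e.1 ∈ S ∧ e.2 ∈ S ∧ e.1 ≠ e.2}) ≤
        steinDiscr N p S q (graphSteinSet N S E) ∧
      steinDiscr N p S q (graphSteinSet N S E) ≤
        2 * t ^ 2 *
          steinDiscr N p S q (graphSteinSet N S {e | e.1 ∈ S ∧ e.2 ∈ S ∧ e.1 ≠ e.2}) :=
  spanner_completeGraph_equiv_general N hN p S q t ht E hE

end Stein
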